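/- Let L_b be σ_b-strongly convex with minimizer θ₀*, L_p be σ_p-strongly convex, α ∈ (0,1), and θ_mix minimize L_mix = α L_p + (1−α) L_b. Then L_b(θ_mix) − L_b(θ₀*) ≤ (γ_b/2)·(α‖∇L_p(θ₀*)‖/(α σ_p + (1−α) σ_b))², where L_b is additionally γ_b-smooth. -/

import Mathlib

open scoped RealInnerProductSpace

lemma grad_zero_of_min {n : ℕ} (f : EuclideanSpace ℝ (Fin n) → ℝ)
    (f' : EuclideanSpace ℝ (Fin n)) (a : EuclideanSpace ℝ (Fin n))
    (hf : HasGradientAt f f' a) (hmin : ∀ x, f a ≤ f x) : f' = 0 := by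
  have hloc : IsLocalMin f a := Filter.Eventually.of_forall hmin
  have h0 := hloc.hasFDerivAt_eq_zero hf.hasFDerivAt
  have := congrArg (InnerProductSpace.toDual ℝ (EuclideanSpace ℝ (Fin n))).symm h0
  simpa using this

lemma descent {n : ℕ} (f : EuclideanSpace ℝ (Fin n) → ℝ)
    (f' : EuclideanSpace ℝ (Fin n) → EuclideanSpace ℝ (Fin n))
    (hf : ∀ x, HasGradientAt f (f' x) x) (γ : ℝ) (hγ : 0 ≤ γ)
    (hsm : ∀ x y, ‖f' x - f' y‖ ≤ γ * ‖x - y‖)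
    (x y : EuclideanSpace ℝ (Fin n)) :
    f y ≤ f x + ⟪f' x, y - x⟫ + γ / 2 * ‖y - x‖ ^ 2 := by
  set d := y - x with hd
  have hline : ∀ t : ℝ, HasDerivAt (fun t : ℝ => x + t • d) d t := by
    intro t
    simpa using ((hasDerivAt_id t).smul_const d).const_add x
  have hg : ∀ t : ℝ, HasDerivAt (fun t : ℝ => f (x + t • d)) ⟪f' (x + t • d), d⟫ t := by
    intro t
    have := (hf (x + t • d)).hasFDerivAt.comp_hasDerivAt t (hline t)
    simpa [InnerProductSpace.toDual_apply_apply, Function.comp_def] using this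
  have hlip : LipschitzWith ⟨γ, hγ⟩ f' := by
    apply LipschitzWith.of_dist_le_mul
    intro a b
    rw [dist_eq_norm, dist_eq_norm]; exact hsm a b
  have hcont : Continuous fun t : ℝ => ⟪f' (x + t • d), d⟫ := by
    apply Continuous.inner
    · exact hlip.continuous.comp (continuous_const.add (continuous_id.smul continuous_const))
    · exact continuous_const
  have hint : f (x + (1:ℝ) • d) - f (x + (0:ℝ) • d) =
      ∫ t in (0:ℝ)..1, ⟪f' (x + t • d), d⟫ := by
    rw [intervalIntegral.integral_eq_sub_of_hasDerivAt (fun t _ => hg t)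
      (hcont.intervalIntegrable 0 1)]
  have hbnd : ∀ t ∈ Set.Icc (0:ℝ) 1, ⟪f' (x + t • d), d⟫ ≤ ⟪f' x, d⟫ + γ * t * ‖d‖ ^ 2 := by
    intro t ht
    have h1 : ⟪f' (x + t • d), d⟫ - ⟪f' x, d⟫ = ⟪f' (x + t • d) - f' x, d⟫ := by
      rw [inner_sub_left]
    have h2 : ⟪f' (x + t • d) - f' x, d⟫ ≤ ‖f' (x + t • d) - f' x‖ * ‖d‖ :=
      real_inner_le_norm _ _
    have h3 : ‖f' (x + t • d) - f' x‖ ≤ γ * (t * ‖d‖) := by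
      have := hsm (x + t • d) x
      simpa [add_sub_cancel_left, norm_smul, abs_of_nonneg ht.1] using this
    nlinarith [norm_nonneg d, mul_le_mul_of_nonneg_right h3 (norm_nonneg d)]
  have hmono : (∫ t in (0:ℝ)..1, ⟪f' (x + t • d), d⟫) ≤
      ∫ t in (0:ℝ)..1, (⟪f' x, d⟫ + γ * t * ‖d‖ ^ 2) := by
    apply intervalIntegral.integral_mono_on (by norm_num)
      (hcont.intervalIntegrable 0 1)
      ((continuous_const.add ((continuous_const.mul continuous_id).mul continuous_const)).intervalIntegrable 0 1)
    exact hbnd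
  have hval : (∫ t in (0:ℝ)..1, (⟪f' x, d⟫ + γ * t * ‖d‖ ^ 2)) =
      ⟪f' x, d⟫ + γ / 2 * ‖d‖ ^ 2 := by
    have heq : ∀ t : ℝ, ⟪f' x, d⟫ + γ * t * ‖d‖ ^ 2 = ⟪f' x, d⟫ + (γ * ‖d‖ ^ 2) * t := by
      intro t; ring
    simp only [heq]
    rw [intervalIntegral.integral_add intervalIntegrable_const
      ((intervalIntegral.intervalIntegrable_id (μ := MeasureTheory.volume) (a:=(0:ℝ)) (b:=1)).const_mul _),
      intervalIntegral.integral_const_mul, integral_id]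
    simp
    ring
  have : f (x + (1:ℝ) • d) ≤ f (x + (0:ℝ) • d) + ⟪f' x, d⟫ + γ / 2 * ‖d‖ ^ 2 := by
    have := hint ▸ (hmono.trans_eq hval)
    linarith [hint, hmono.trans_eq hval]
  simpa [hd] using this


set_option maxHeartbeats 1000000 in
/-- Benign-loss degradation caused by poisoning. -/
theorem stmt_14 {n : ℕ}
    (Lp Lb : EuclideanSpace ℝ (Fin n) → ℝ)
    (Lp' Lb' : EuclideanSpace ℝ (Fin n) → EuclideanSpace ℝ (Fin n))
    (σp σb γb α : ℝ)
    (hLp' : ∀ x, HasGradientAt Lp (Lp' x) x)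
    (hLb' : ∀ x, HasGradientAt Lb (Lb' x) x)
    (hp : ∀ x y, ⟪Lp' x - Lp' y, x - y⟫ ≥ σp * ‖x - y‖ ^ 2)
    (hb : ∀ x y, ⟪Lb' x - Lb' y, x - y⟫ ≥ σb * ‖x - y‖ ^ 2)
    (hbsmooth : ∀ x y, ‖Lb' x - Lb' y‖ ≤ γb * ‖x - y‖)
    (hσp : 0 < σp) (hσb : 0 < σb)
    (hα : α ∈ Set.Ioo (0 : ℝ) 1)
    (θmix θ0star : EuclideanSpace ℝ (Fin n))
    (hmix : ∀ θ, α * Lp θmix + (1 - α) * Lb θmix ≤ α * Lp θ + (1 - α) * Lb θ)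
    (h0star : ∀ θ, Lb θ0star ≤ Lb θ) :
    Lb θmix - Lb θ0star ≤
      (γb / 2) * (α * ‖Lp' θ0star‖ / (α * σp + (1 - α) * σb)) ^ 2 := by
  obtain ⟨hα0, hα1⟩ := hα
  have hα1' : 0 < 1 - α := by linarith
  set σm : ℝ := α * σp + (1 - α) * σb with hσm_def
  have hσm : 0 < σm := by positivity
  -- gradient of Lb vanishes at θ0star
  have hLb0 : Lb' θ0star = 0 := grad_zero_of_min Lb _ θ0star (hLb' θ0star) h0star
  -- gradient of the mixed loss vanishes at θmix
  have hgmix : HasGradientAt (fun θ => α * Lp θ + (1 - α) * Lb θ)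
      (α • Lp' θmix + (1 - α) • Lb' θmix) θmix := by
    rw [hasGradientAt_iff_hasFDerivAt, map_add, map_smul, map_smul]
    exact ((hLp' θmix).hasFDerivAt.const_mul α).add ((hLb' θmix).hasFDerivAt.const_mul (1 - α))
  have hmix0 : α • Lp' θmix + (1 - α) • Lb' θmix = 0 :=
    grad_zero_of_min _ _ θmix hgmix hmix
  set d : EuclideanSpace ℝ (Fin n) := θmix - θ0star with hd_def
  -- key inequality: σm ‖d‖² ≤ α ‖Lp' θ0star‖ ‖d‖
  have hcomb : α • (Lp' θmix - Lp' θ0star) + (1 - α) • (Lb' θmix - Lb' θ0star)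
      = -(α • Lp' θ0star) := by
    rw [smul_sub, smul_sub, hLb0, smul_zero, sub_zero]
    have h : α • Lp' θmix - α • Lp' θ0star + (1 - α) • Lb' θmix =
        (α • Lp' θmix + (1 - α) • Lb' θmix) - α • Lp' θ0star := by abel
    rw [h, hmix0, zero_sub]
  have hinner : α * ⟪Lp' θmix - Lp' θ0star, d⟫ + (1 - α) * ⟪Lb' θmix - Lb' θ0star, d⟫
      = ⟪-(α • Lp' θ0star), d⟫ := by
    rw [← hcomb, inner_add_left, real_inner_smul_left, real_inner_smul_left]
  have hcs : ⟪-(α • Lp' θ0star), d⟫ ≤ α * ‖Lp' θ0star‖ * ‖d‖ := by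
    calc ⟪-(α • Lp' θ0star), d⟫ ≤ ‖-(α • Lp' θ0star)‖ * ‖d‖ := real_inner_le_norm _ _
      _ = α * ‖Lp' θ0star‖ * ‖d‖ := by
          rw [norm_neg, norm_smul, Real.norm_eq_abs, abs_of_pos hα0]
  have hkey : σm * ‖d‖ ^ 2 ≤ α * ‖Lp' θ0star‖ * ‖d‖ := by
    have h1 := hp θmix θ0star
    have h2 := hb θmix θ0star
    simp only [← hd_def] at h1 h2
    have h1' : α * (σp * ‖d‖ ^ 2) ≤ α * ⟪Lp' θmix - Lp' θ0star, d⟫ :=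
      mul_le_mul_of_nonneg_left h1 hα0.le
    have h2' : (1 - α) * (σb * ‖d‖ ^ 2) ≤ (1 - α) * ⟪Lb' θmix - Lb' θ0star, d⟫ :=
      mul_le_mul_of_nonneg_left h2 hα1'.le
    nlinarith [hinner, hcs]
  have hdist : ‖d‖ ≤ α * ‖Lp' θ0star‖ / σm := by
    rw [le_div_iff₀ hσm]
    rcases eq_or_lt_of_le (norm_nonneg d) with h | h
    · rw [← h, zero_mul]; positivity
    · nlinarith
  -- handle the degenerate case Lp' θ0star = 0
  by_cases hz : Lp' θ0star = 0
  · have hd0 : ‖d‖ = 0 := by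
      have hle : σm * ‖d‖ ^ 2 ≤ 0 := by simpa [hz] using hkey
      have hsq : ‖d‖ ^ 2 = 0 := le_antisymm (by nlinarith) (sq_nonneg _)
      exact (pow_eq_zero_iff two_ne_zero).mp hsq
    have : θmix = θ0star := by
      have := norm_eq_zero.mp hd0
      rwa [hd_def, sub_eq_zero] at this
    simp [this, hz]
  -- nondegenerate case: γb ≥ 0
  have hγb : 0 ≤ γb := by
    have hv : 0 < ‖Lp' θ0star‖ := norm_pos_iff.mpr hz
    have h1 := hb (Lp' θ0star) 0
    have h2 := hbsmooth (Lp' θ0star) 0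
    have h3 := real_inner_le_norm (Lb' (Lp' θ0star) - Lb' 0) (Lp' θ0star - 0)
    have h4 : ‖Lp' θ0star - (0 : EuclideanSpace ℝ (Fin n))‖ = ‖Lp' θ0star‖ := by simp
    rw [h4] at h1 h2 h3
    nlinarith [norm_nonneg (Lb' (Lp' θ0star) - Lb' 0)]
  -- descent lemma
  have hdesc := descent Lb Lb' hLb' γb hγb hbsmooth θ0star θmix
  rw [hLb0] at hdesc
  simp only [inner_zero_left, add_zero] at hdesc
  simp only [← hd_def] at hdesc
  have hdesc' : Lb θmix - Lb θ0star ≤ γb / 2 * ‖d‖ ^ 2 := by linarith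
  calc Lb θmix - Lb θ0star ≤ γb / 2 * ‖d‖ ^ 2 := hdesc'
    _ ≤ γb / 2 * (α * ‖Lp' θ0star‖ / σm) ^ 2 := by
        apply mul_le_mul_of_nonneg_left _ (by linarith)
        exact pow_le_pow_left₀ (norm_nonneg d) hdist 2
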